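/- For every icosian q = a + bi + cj + dk, the quaternionic norm ‖q‖² = a² + b² + c² + d² can be written uniquely as x + y√5 with x, y rational, and the Conway–Sloane norm |q|² := x + y is a nonnegative integer; moreover |q|² = 0 if and only if q = 0 (so the Conway–Sloane norm is positive definite on the icosians). -/

import Mathlib

noncomputable section

open scoped Quaternion

/-- The little golden ratio. -/
def φ : ℝ := (Real.sqrt 5 - 1) / 2

/-- The big golden ratio. -/
def Φ : ℝ := (Real.sqrt 5 + 1) / 2

/-- A real number is a sign if it is `1` or `-1`. -/
def IsSign (s : ℝ) : Prop := s = 1 ∨ s = -1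

/-- The coordinate vector of a quaternion `a + bi + cj + dk`. -/
def coords (q : ℍ[ℝ]) : Fin 4 → ℝ := ![q.re, q.imI, q.imJ, q.imK]

/-- The base coordinate vectors `(±1,0,0,0)`, `(±1/2,±1/2,±1/2,±1/2)`, `(0,±1/2,±φ/2,±Φ/2)`. -/
def baseVectors : Set (Fin 4 → ℝ) :=
  {v | (∃ s, IsSign s ∧ v = ![s, 0, 0, 0]) ∨
       (∃ s₀ s₁ s₂ s₃, IsSign s₀ ∧ IsSign s₁ ∧ IsSign s₂ ∧ IsSign s₃ ∧
          v = ![s₀ / 2, s₁ / 2, s₂ / 2, s₃ / 2]) ∨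
       (∃ s₁ s₂ s₃, IsSign s₁ ∧ IsSign s₂ ∧ IsSign s₃ ∧
          v = ![0, s₁ / 2, s₂ * φ / 2, s₃ * Φ / 2])}

/-- The binary icosahedral group: quaternions whose coordinate vector is obtained from a base
vector by an even permutation of the four coordinates. -/
def binaryIcosahedral : Set ℍ[ℝ] :=
  {q | ∃ v ∈ baseVectors, ∃ σ : Equiv.Perm (Fin 4),
        σ ∈ alternatingGroup (Fin 4) ∧ coords q = v ∘ σ}

/-- The icosian ring: the additive subgroup of the quaternions generated by the binary
icosahedral group. -/
def icosians : AddSubgroup ℍ[ℝ] := AddSubgroup.closure binaryIcosahedral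

/-- The squared quaternionic norm `a² + b² + c² + d²`. -/
def nsq (q : ℍ[ℝ]) : ℝ := q.re ^ 2 + q.imI ^ 2 + q.imJ ^ 2 + q.imK ^ 2

/-!
Every coordinate of an icosian lies in `ℤ[φ] / 2`, so an icosian is `((m i + n i φ) / 2)ᵢ` with
`m n : Fin 4 → ℤ`. Since `φ² = 1 - φ` and `φ = (√5 - 1) / 2`, writing `‖q‖² = A + B φ` gives
`x + y = A = ∑ (m i ² + n i ²) / 4`, which vanishes only for `m = n = 0`. As `a² ≡ a mod 2` modulo 4,
`∑ (m i ² + n i ²)` is congruent modulo 4 to the Hamming weight of `(m, n) mod 2`; these reductions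
lie in a binary code all of whose weights are divisible by 4, hence `x + y` is an integer.
-/

theorem Irrational.eq_and_eq_of_add_mul_eq {r : ℝ} (hr : Irrational r) {x y x' y' : ℚ}
    (h : (x : ℝ) + y * r = x' + y' * r) : x = x' ∧ y = y' := by
  obtain rfl : y = y' := by
    by_contra hy
    have hy' : (y : ℝ) - y' ≠ 0 := sub_ne_zero.mpr (by exact_mod_cast hy)
    refine hr ⟨(x' - x) / (y - y'), ?_⟩
    push_cast
    field_simp
    linarith
  exact ⟨by exact_mod_cast add_right_cancel h, rfl⟩

lemma Int.sq_modEq_four_zmod_two_val (a : ℤ) : a ^ 2 ≡ ((a : ZMod 2).val : ℤ) [ZMOD 4] := by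
  rw [ZMod.val_intCast, Int.ModEq]
  rcases Int.even_or_odd' a with ⟨k, rfl | rfl⟩ <;> ring_nf <;> omega

lemma coords_injective : Function.Injective coords :=
  (Quaternion.equivTuple ℝ).injective

lemma IsSign.exists_intCast {s : ℝ} (hs : IsSign s) : ∃ k : ℤ, s = k ∧ (k : ZMod 2) = 1 := by
  rcases hs with rfl | rfl
  exacts [⟨1, by simp, rfl⟩, ⟨-1, by simp, rfl⟩]

/-- The image of the icosians modulo 2 in the coordinates of `halfGolden`: the extended Hamming
`[8,4,4]` code. It is self-dual, so its parity checks are four of its codewords. -/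
def goldenCode : AddSubgroup ((Fin 4 → ZMod 2) × (Fin 4 → ZMod 2)) where
  carrier := {w | ∑ i, w.1 i = 0 ∧ ∑ i, w.2 i = 0 ∧
    w.1 2 + w.1 3 + w.2 1 + w.2 2 = 0 ∧ w.1 1 + w.1 3 + w.2 2 + w.2 3 = 0}
  add_mem' := by
    rintro ⟨u, v⟩ ⟨u', v'⟩ ⟨h₁, h₂, h₃, h₄⟩ ⟨h₁', h₂', h₃', h₄'⟩
    simp only [Set.mem_ofPred_eq, Prod.mk_add_mk, Pi.add_apply, Finset.sum_add_distrib] at *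
    exact ⟨by rw [h₁, h₁', add_zero], by rw [h₂, h₂', add_zero], by linear_combination h₃ + h₃',
      by linear_combination h₄ + h₄'⟩
  zero_mem' := by simp
  neg_mem' := by
    rintro ⟨u, v⟩ h
    simpa only [ZModModule.neg_eq_self] using h

instance : DecidablePred (· ∈ goldenCode) := fun w =>
  inferInstanceAs (Decidable (∑ i, w.1 i = 0 ∧ ∑ i, w.2 i = 0 ∧
    w.1 2 + w.1 3 + w.2 1 + w.2 2 = 0 ∧ w.1 1 + w.1 3 + w.2 2 + w.2 3 = 0))

lemma four_dvd_weight_of_mem_goldenCode :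
    ∀ w ∈ goldenCode, 4 ∣ ∑ i, ((w.1 i).val + (w.2 i).val) := by
  decide +kernel

lemma comp_mem_goldenCode_of_sign_eq_one : ∀ σ : Equiv.Perm (Fin 4), Equiv.Perm.sign σ = 1 →
    (![0, 1, 0, 1] ∘ σ, ![0, 0, 1, 1] ∘ σ) ∈ goldenCode := by
  decide +kernel

def reduceModTwo : (Fin 4 → ℤ) × (Fin 4 → ℤ) →+ (Fin 4 → ZMod 2) × (Fin 4 → ZMod 2) :=
  ((Int.castAddHom (ZMod 2)).compLeft (Fin 4)).prodMap ((Int.castAddHom (ZMod 2)).compLeft (Fin 4))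

def halfGolden : (Fin 4 → ℤ) × (Fin 4 → ℤ) →+ ℍ[ℝ] :=
  (QuaternionAlgebra.addEquivTuple (-1 : ℝ) 0 (-1)).symm.toAddMonoidHom.comp
    (AddMonoidHom.mk' (fun w i => ((w.1 i : ℝ) + w.2 i * φ) / 2) fun w w' => by
      ext; simp only [Prod.fst_add, Prod.snd_add, Pi.add_apply]; push_cast; ring)

lemma coords_halfGolden (w : (Fin 4 → ℤ) × (Fin 4 → ℤ)) :
    coords (halfGolden w) = fun i => ((w.1 i : ℝ) + w.2 i * φ) / 2 :=
  (Quaternion.equivTuple ℝ).apply_symm_apply _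

def icosianLattice : AddSubgroup ℍ[ℝ] := (goldenCode.comap reduceModTwo).map halfGolden

lemma exists_halfGolden_eq_of_mem_baseVectors {v : Fin 4 → ℝ} (hv : v ∈ baseVectors)
    {σ : Equiv.Perm (Fin 4)} (hσ : Equiv.Perm.sign σ = 1) :
    ∃ m n : Fin 4 → ℤ, (fun j => ((m j : ℝ) + n j * φ) / 2) = v ∧
      ((fun j => (m j : ZMod 2)) ∘ σ, (fun j => (n j : ZMod 2)) ∘ σ) ∈ goldenCode := by
  rcases hv with ⟨s, hs, rfl⟩ | ⟨s₀, s₁, s₂, s₃, h₀, h₁, h₂, h₃, rfl⟩ |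
      ⟨s₁, s₂, s₃, h₁, h₂, h₃, rfl⟩
  · obtain ⟨k, rfl, -⟩ := hs.exists_intCast
    refine ⟨![2 * k, 0, 0, 0], 0, by ext j; fin_cases j <;> simp, ?_⟩
    have hm : (fun j => ((![2 * k, 0, 0, 0] j : ℤ) : ZMod 2)) = 0 := by
      ext j; fin_cases j <;> simp [show (2 : ZMod 2) = 0 from rfl]
    rw [hm]
    exact goldenCode.zero_mem
  · obtain ⟨k₀, rfl, hk₀⟩ := h₀.exists_intCast
    obtain ⟨k₁, rfl, hk₁⟩ := h₁.exists_intCast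
    obtain ⟨k₂, rfl, hk₂⟩ := h₂.exists_intCast
    obtain ⟨k₃, rfl, hk₃⟩ := h₃.exists_intCast
    refine ⟨![k₀, k₁, k₂, k₃], 0, by ext j; fin_cases j <;> simp, ?_⟩
    have hm : (fun j => ((![k₀, k₁, k₂, k₃] j : ℤ) : ZMod 2)) = 1 := by
      ext j; fin_cases j <;> simp [hk₀, hk₁, hk₂, hk₃]
    rw [hm]
    exact (by decide : ((1 : Fin 4 → ZMod 2), (0 : Fin 4 → ZMod 2)) ∈ goldenCode)
  · obtain ⟨k₁, rfl, hk₁⟩ := h₁.exists_intCast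
    obtain ⟨k₂, rfl, hk₂⟩ := h₂.exists_intCast
    obtain ⟨k₃, rfl, hk₃⟩ := h₃.exists_intCast
    refine ⟨![0, k₁, 0, k₃], ![0, 0, k₂, k₃], by ext j; fin_cases j <;> simp [Φ, φ]; ring, ?_⟩
    have hm : (fun j => ((![0, k₁, 0, k₃] j : ℤ) : ZMod 2)) = ![0, 1, 0, 1] := by
      ext j; fin_cases j <;> simp [hk₁, hk₃]
    have hn : (fun j => ((![0, 0, k₂, k₃] j : ℤ) : ZMod 2)) = ![0, 0, 1, 1] := by
      ext j; fin_cases j <;> simp [hk₂, hk₃]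
    rw [hm, hn]
    exact comp_mem_goldenCode_of_sign_eq_one σ hσ

lemma binaryIcosahedral_subset_icosianLattice : binaryIcosahedral ⊆ icosianLattice := by
  rintro q ⟨v, hv, σ, hσ, hq⟩
  obtain ⟨m, n, rfl, hmn⟩ :=
    exists_halfGolden_eq_of_mem_baseVectors hv (Equiv.Perm.mem_alternatingGroup.mp hσ)
  exact ⟨(m ∘ σ, n ∘ σ), hmn, coords_injective (by rw [coords_halfGolden, hq]; rfl)⟩

lemma icosians_le_icosianLattice : icosians ≤ icosianLattice :=
  (AddSubgroup.closure_le _).mpr binaryIcosahedral_subset_icosianLattice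

lemma sq_halfGolden_coord (a b : ℤ) :
    (((a : ℝ) + b * φ) / 2) ^ 2 =
      (2 * a ^ 2 - 2 * a * b + 3 * b ^ 2 : ℤ) / 8 + ((2 * a * b - b ^ 2 : ℤ) / 8) * √5 := by
  have h5 : √5 ^ 2 = 5 := Real.sq_sqrt (by norm_num)
  push_cast
  simp only [φ]
  linear_combination b ^ 2 / 16 * h5

def nsqRatPart (w : (Fin 4 → ℤ) × (Fin 4 → ℤ)) : ℚ :=
  ∑ i, ((2 * w.1 i ^ 2 - 2 * w.1 i * w.2 i + 3 * w.2 i ^ 2 : ℤ) : ℚ) / 8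

def nsqSqrtFivePart (w : (Fin 4 → ℤ) × (Fin 4 → ℤ)) : ℚ :=
  ∑ i, ((2 * w.1 i * w.2 i - w.2 i ^ 2 : ℤ) : ℚ) / 8

lemma nsq_eq_sum_coords_sq (q : ℍ[ℝ]) : nsq q = ∑ i, coords q i ^ 2 := by
  simp [nsq, coords, Fin.sum_univ_four]

lemma nsq_halfGolden (w : (Fin 4 → ℤ) × (Fin 4 → ℤ)) :
    nsq (halfGolden w) = nsqRatPart w + nsqSqrtFivePart w * √5 := by
  rw [nsq_eq_sum_coords_sq, coords_halfGolden]
  simp only [sq_halfGolden_coord, nsqRatPart, nsqSqrtFivePart, Finset.sum_add_distrib]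
  push_cast
  rw [Finset.sum_mul]

lemma nsqRatPart_add_nsqSqrtFivePart (w : (Fin 4 → ℤ) × (Fin 4 → ℤ)) :
    nsqRatPart w + nsqSqrtFivePart w = ((∑ i, (w.1 i ^ 2 + w.2 i ^ 2) : ℤ) : ℚ) / 4 := by
  simp only [nsqRatPart, nsqSqrtFivePart, ← Finset.sum_add_distrib]
  push_cast
  rw [Finset.sum_div]
  exact Finset.sum_congr rfl fun i _ => by ring

lemma four_dvd_sum_sq {w : (Fin 4 → ℤ) × (Fin 4 → ℤ)} (hw : reduceModTwo w ∈ goldenCode) :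
    4 ∣ ∑ i, (w.1 i ^ 2 + w.2 i ^ 2) := by
  have hweight : ∑ i, (w.1 i ^ 2 + w.2 i ^ 2) ≡
      ((∑ i, ((w.1 i : ZMod 2).val + (w.2 i : ZMod 2).val) : ℕ) : ℤ) [ZMOD 4] := by
    push_cast
    exact Int.ModEq.sum fun i _ =>
      (Int.sq_modEq_four_zmod_two_val _).add (Int.sq_modEq_four_zmod_two_val _)
  refine Int.modEq_zero_iff_dvd.mp (hweight.trans (Int.modEq_zero_iff_dvd.mpr ?_))
  exact_mod_cast four_dvd_weight_of_mem_goldenCode _ hw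

lemma exists_nat_eq_nsqRatPart_add_nsqSqrtFivePart {w : (Fin 4 → ℤ) × (Fin 4 → ℤ)}
    (hw : reduceModTwo w ∈ goldenCode) : ∃ n : ℕ, nsqRatPart w + nsqSqrtFivePart w = n := by
  obtain ⟨k, hk⟩ := four_dvd_sum_sq hw
  have hk0 : 0 ≤ k := by
    have : 0 ≤ ∑ i, (w.1 i ^ 2 + w.2 i ^ 2) := by positivity
    omega
  lift k to ℕ using hk0
  refine ⟨k, ?_⟩
  rw [nsqRatPart_add_nsqSqrtFivePart, hk]
  push_cast
  ring

lemma eq_zero_of_sum_sq_eq_zero {w : (Fin 4 → ℤ) × (Fin 4 → ℤ)}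
    (hw : ∑ i, (w.1 i ^ 2 + w.2 i ^ 2) = 0) : w = 0 := by
  rw [Finset.sum_eq_zero_iff_of_nonneg fun i _ => by positivity] at hw
  have h (i : Fin 4) := (add_eq_zero_iff_of_nonneg (sq_nonneg _) (sq_nonneg _)).mp
    (hw i (Finset.mem_univ i))
  ext i
  exacts [pow_eq_zero_iff two_ne_zero |>.mp (h i).1, pow_eq_zero_iff two_ne_zero |>.mp (h i).2]

theorem stmt6 :
    ∀ q ∈ icosians, ∃ x y : ℚ,
      nsq q = (x : ℝ) + (y : ℝ) * Real.sqrt 5 ∧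
      (∀ x' y' : ℚ, nsq q = (x' : ℝ) + (y' : ℝ) * Real.sqrt 5 → x' = x ∧ y' = y) ∧
      (∃ n : ℕ, x + y = (n : ℚ)) ∧
      (x + y = 0 ↔ q = 0) := by
  intro q hq
  obtain ⟨w, hw, rfl⟩ := icosians_le_icosianLattice hq
  have hsqrt5 : Irrational √5 := by simpa using Nat.prime_five.irrational_sqrt
  have hunique (x' y' : ℚ) (h : nsq (halfGolden w) = x' + y' * √5) :
      x' = nsqRatPart w ∧ y' = nsqSqrtFivePart w :=
    hsqrt5.eq_and_eq_of_add_mul_eq (h.symm.trans (nsq_halfGolden w))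
  refine ⟨nsqRatPart w, nsqSqrtFivePart w, nsq_halfGolden w, hunique,
    exists_nat_eq_nsqRatPart_add_nsqSqrtFivePart hw, fun h => ?_, fun h => ?_⟩
  · rw [nsqRatPart_add_nsqSqrtFivePart, div_eq_zero_iff] at h
    have hsum : ∑ i, (w.1 i ^ 2 + w.2 i ^ 2) = 0 := by
      exact_mod_cast h.resolve_right four_ne_zero
    rw [eq_zero_of_sum_sq_eq_zero hsum, map_zero]
  · obtain ⟨hx, hy⟩ := hunique 0 0 (by simp [h, nsq])
    rw [← hx, ← hy, add_zero]
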